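/- arXiv:2310.13164 — 4 statements merged into one kernel-verified Lean document; each statement's English description precedes it below -/
import Mathlib

section
/- Let E be a real inner product space, ε > 0, and T : E → E an ε-isometry with T(0) = 0 (i.e., |‖T(x) − T(y)‖ − ‖x − y‖| < ε for all x,y). Then for every x ∈ E, ‖T(x) − T(2x)/2‖ < 2√(ε‖x‖) when ‖x‖ ≥ ε, and ‖T(x) − T(2x)/2‖ < 2ε when ‖x‖ < ε. -/
/-- Hyers–Ulam halving estimate for an ε-isometry fixing the origin. -/
theorem eps_isometry_halving {E : Type*} [NormedAddCommGroup E]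
    [InnerProductSpace ℝ E] (ε : ℝ) (hε : 0 < ε) (T : E → E)
    (hT : ∀ x y : E, |‖T x - T y‖ - ‖x - y‖| < ε) (hT0 : T 0 = 0) :
    ∀ x : E,
      (ε ≤ ‖x‖ → ‖T x - (2 : ℝ)⁻¹ • T ((2 : ℝ) • x)‖ < 2 * Real.sqrt (ε * ‖x‖)) ∧
      (‖x‖ < ε → ‖T x - (2 : ℝ)⁻¹ • T ((2 : ℝ) • x)‖ < 2 * ε) := by
  intro x
  have hr0 : 0 ≤ ‖x‖ := norm_nonneg x
  have h1 := hT x 0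
  rw [hT0, sub_zero, sub_zero] at h1
  have h2 := hT ((2:ℝ) • x) 0
  rw [hT0, sub_zero, sub_zero, norm_smul] at h2
  have hn2 : ‖(2:ℝ)‖ = 2 := by norm_num
  rw [hn2] at h2
  have h3 := hT x ((2:ℝ) • x)
  have hx2 : ‖x - (2:ℝ) • x‖ = ‖x‖ := by
    have : x - (2:ℝ) • x = -x := by module
    rw [this, norm_neg]
  rw [hx2] at h3
  set a := T x with ha
  set b := T ((2:ℝ) • x) with hb
  have hpar := parallelogram_law_with_norm ℝ (a - (2:ℝ)⁻¹ • b) ((2:ℝ)⁻¹ • b)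
  have e1 : a - (2:ℝ)⁻¹ • b + (2:ℝ)⁻¹ • b = a := by module
  have e2 : a - (2:ℝ)⁻¹ • b - (2:ℝ)⁻¹ • b = a - b := by module
  rw [e1, e2] at hpar
  have hnb : ‖(2:ℝ)⁻¹ • b‖ = 2⁻¹ * ‖b‖ := by
    rw [norm_smul]; norm_num
  rw [hnb] at hpar
  obtain ⟨h1a, h1b⟩ := abs_lt.mp h1
  obtain ⟨h2a, h2b⟩ := abs_lt.mp h2
  obtain ⟨h3a, h3b⟩ := abs_lt.mp h3
  have hu0 : 0 ≤ ‖a - (2:ℝ)⁻¹ • b‖ := norm_nonneg _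
  have hb0 : 0 ≤ ‖b‖ := norm_nonneg _
  have ha0 : 0 ≤ ‖a‖ := norm_nonneg _
  have hab0 : 0 ≤ ‖a - b‖ := norm_nonneg _
  constructor
  · intro hεr
    have key : ‖a - (2:ℝ)⁻¹ • b‖ ^ 2 < 4 * (ε * ‖x‖) := by nlinarith
    have h4 : ‖a - (2:ℝ)⁻¹ • b‖ < Real.sqrt (4 * (ε * ‖x‖)) :=
      (Real.lt_sqrt hu0).mpr key
    calc ‖a - (2:ℝ)⁻¹ • b‖ < Real.sqrt (4 * (ε * ‖x‖)) := h4
      _ = 2 * Real.sqrt (ε * ‖x‖) := by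
          rw [show (4:ℝ) * (ε * ‖x‖) = 2 ^ 2 * (ε * ‖x‖) by ring,
            Real.sqrt_mul (by positivity), Real.sqrt_sq (by norm_num)]
  · intro hrε
    nlinarith
end

section
/- Let E be a real inner product space, ε > 0, T : E → E an ε-isometry with T(0) = 0, and suppose ‖T(x/2) − T(x)/2‖ < 2^{-1/2}·k·‖x‖^{1/2} + 2ε for all x with k = 2ε^{1/2}. Then for every n ≥ 1 and x ∈ E, ‖T(2^{-n}x) − 2^{-n}T(x)‖ < 2^{-n/2}·k·‖x‖^{1/2}·(Σ_{i=0}^{n-1} 2^{-i/2}) + (1 − 2^{-n})·4ε. -/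
open Real Finset in
/-- Inductive step in the Hyers–Ulam proof: dyadic estimate for an ε-isometry. -/
theorem eps_isometry_dyadic_estimate {E : Type*} [NormedAddCommGroup E]
    [InnerProductSpace ℝ E] (ε : ℝ) (hε : 0 < ε) (T : E → E)
    (hT : ∀ x y : E, |‖T x - T y‖ - ‖x - y‖| < ε) (hT0 : T 0 = 0)
    (k : ℝ) (hk : k = 2 * ε ^ ((1 : ℝ) / 2))
    (hhalf : ∀ x : E, ‖T ((2 : ℝ)⁻¹ • x) - (2 : ℝ)⁻¹ • T x‖ <
      (2 : ℝ) ^ (-(1 : ℝ) / 2) * k * ‖x‖ ^ ((1 : ℝ) / 2) + 2 * ε) :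
    ∀ (n : ℕ), 1 ≤ n → ∀ x : E,
      ‖T (((2 : ℝ) ^ (-(n : ℝ))) • x) - ((2 : ℝ) ^ (-(n : ℝ))) • T x‖ <
        (2 : ℝ) ^ (-(n : ℝ) / 2) * k * ‖x‖ ^ ((1 : ℝ) / 2) *
          (∑ i ∈ Finset.range n, (2 : ℝ) ^ (-(i : ℝ) / 2)) +
        (1 - (2 : ℝ) ^ (-(n : ℝ))) * 4 * ε := by
  intro n hn
  induction n, hn using Nat.le_induction with
  | base =>
    intro x
    have h := hhalf x
    have e1 : (2 : ℝ) ^ (-((1 : ℕ) : ℝ)) = (2 : ℝ)⁻¹ := by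
      norm_num [Real.rpow_neg_one]
    rw [e1]
    have e2 : ∑ i ∈ Finset.range 1, (2 : ℝ) ^ (-(i : ℝ) / 2) = 1 := by
      simp
    rw [e2]
    push_cast
    calc ‖T ((2 : ℝ)⁻¹ • x) - (2 : ℝ)⁻¹ • T x‖
        < (2 : ℝ) ^ (-(1 : ℝ) / 2) * k * ‖x‖ ^ ((1 : ℝ) / 2) + 2 * ε := h
      _ = (2 : ℝ) ^ (-(1 : ℝ) / 2) * k * ‖x‖ ^ ((1 : ℝ) / 2) * 1
          + (1 - (2 : ℝ)⁻¹) * 4 * ε := by ring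
  | succ n hn ih =>
    intro x
    set y : E := ((2 : ℝ) ^ (-(n : ℝ))) • x with hy
    have h2n : (0 : ℝ) < (2 : ℝ) ^ (-(n : ℝ)) := Real.rpow_pos_of_pos (by norm_num) _
    have h1 : (2 : ℝ) ^ (-((n + 1 : ℕ) : ℝ) / 2)
        = (2 : ℝ) ^ (-(1 : ℝ) / 2) * (2 : ℝ) ^ (-(n : ℝ) / 2) := by
      rw [← Real.rpow_add (by norm_num)]
      push_cast
      ring_nf
    have h2 : (2 : ℝ) ^ (-((n + 1 : ℕ) : ℝ)) = (2 : ℝ)⁻¹ * (2 : ℝ) ^ (-(n : ℝ)) := by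
      rw [show ((2 : ℝ)⁻¹ = (2 : ℝ) ^ (-(1 : ℝ))) by norm_num [Real.rpow_neg_one],
        ← Real.rpow_add (by norm_num)]
      push_cast
      ring_nf
    have h3 : (2 : ℝ) ^ (-(1 : ℝ) / 2) * (2 : ℝ) ^ (-(1 : ℝ) / 2) = (2 : ℝ)⁻¹ := by
      rw [← Real.rpow_add (by norm_num)]
      norm_num [Real.rpow_neg_one]
    -- norm of y raised to 1/2
    have hny : ‖y‖ ^ ((1 : ℝ) / 2)
        = (2 : ℝ) ^ (-(n : ℝ) / 2) * ‖x‖ ^ ((1 : ℝ) / 2) := by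
      rw [hy, norm_smul, Real.norm_eq_abs, abs_of_pos h2n,
        Real.mul_rpow h2n.le (norm_nonneg x), ← Real.rpow_mul (by norm_num)]
      congr 1
      ring
    -- sum identity
    have hsum : ∑ i ∈ Finset.range (n + 1), (2 : ℝ) ^ (-(i : ℝ) / 2)
        = 1 + (2 : ℝ) ^ (-(1 : ℝ) / 2) * ∑ i ∈ Finset.range n, (2 : ℝ) ^ (-(i : ℝ) / 2) := by
      rw [Finset.sum_range_succ', Finset.mul_sum]
      have hterm : ∀ i ∈ Finset.range n,
          (2 : ℝ) ^ (-((i + 1 : ℕ) : ℝ) / 2)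
            = (2 : ℝ) ^ (-(1 : ℝ) / 2) * (2 : ℝ) ^ (-(i : ℝ) / 2) := by
        intro i _
        rw [← Real.rpow_add (by norm_num)]
        push_cast
        ring_nf
      rw [Finset.sum_congr rfl hterm]
      push_cast
      norm_num [add_comm]
    -- decomposition
    have hdec : T (((2 : ℝ) ^ (-((n + 1 : ℕ) : ℝ))) • x) - ((2 : ℝ) ^ (-((n + 1 : ℕ) : ℝ))) • T x
        = (T ((2 : ℝ)⁻¹ • y) - (2 : ℝ)⁻¹ • T y)
          + (2 : ℝ)⁻¹ • (T y - ((2 : ℝ) ^ (-(n : ℝ))) • T x) := by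
      rw [h2, hy, smul_smul, smul_sub, smul_smul]
      abel
    have ha := hhalf y
    have hb := ih x
    have hnorm2 : ‖(2 : ℝ)⁻¹ • (T y - ((2 : ℝ) ^ (-(n : ℝ))) • T x)‖
        = (2 : ℝ)⁻¹ * ‖T y - ((2 : ℝ) ^ (-(n : ℝ))) • T x‖ := by
      rw [norm_smul, Real.norm_eq_abs]
      norm_num
    calc ‖T (((2 : ℝ) ^ (-((n + 1 : ℕ) : ℝ))) • x) - ((2 : ℝ) ^ (-((n + 1 : ℕ) : ℝ))) • T x‖
        ≤ ‖T ((2 : ℝ)⁻¹ • y) - (2 : ℝ)⁻¹ • T y‖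
          + ‖(2 : ℝ)⁻¹ • (T y - ((2 : ℝ) ^ (-(n : ℝ))) • T x)‖ := by
          rw [hdec]; exact norm_add_le _ _
      _ < ((2 : ℝ) ^ (-(1 : ℝ) / 2) * k * ‖y‖ ^ ((1 : ℝ) / 2) + 2 * ε)
          + (2 : ℝ)⁻¹ * ((2 : ℝ) ^ (-(n : ℝ) / 2) * k * ‖x‖ ^ ((1 : ℝ) / 2) *
            (∑ i ∈ Finset.range n, (2 : ℝ) ^ (-(i : ℝ) / 2))
            + (1 - (2 : ℝ) ^ (-(n : ℝ))) * 4 * ε) := by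
          rw [hnorm2]
          exact add_lt_add ha (by linarith [hb])
      _ = (2 : ℝ) ^ (-((n + 1 : ℕ) : ℝ) / 2) * k * ‖x‖ ^ ((1 : ℝ) / 2) *
            (∑ i ∈ Finset.range (n + 1), (2 : ℝ) ^ (-(i : ℝ) / 2))
          + (1 - (2 : ℝ) ^ (-((n + 1 : ℕ) : ℝ))) * 4 * ε := by
          rw [hny, hsum, h1, h2]
          linear_combination (-((2 : ℝ) ^ (-(n : ℝ) / 2) * k * ‖x‖ ^ ((1 : ℝ) / 2) *
            (∑ i ∈ Finset.range n, (2 : ℝ) ^ (-(i : ℝ) / 2)))) * h3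
end

section
/- Let E be a complete real Hilbert space, ε > 0, and T : E → E a surjective ε-isometry with T(0) = 0. Then the limit I(x) = lim_{n→∞} T(2ⁿx)/2ⁿ exists for every x ∈ E, and I is an isometry of E satisfying ‖T(x) − I(x)‖ ≤ 10ε for all x ∈ E. -/
/-!
The dyadic rescalings `2⁻ⁿ • T (2ⁿ • x)` form a Cauchy sequence: in a Hilbert space the
parallelogram law gives `‖T z - 2⁻¹ • T (2 • z)‖² ≤ 3ε‖z‖ + ε²`, so consecutive terms differ by
`O(2^(-n/2))`, and summing the geometric series also gives `‖T x - I x‖ = O(√‖x‖)`. The limit `I`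
is an isometry fixing `0`, hence linear. Polarization gives `|⟪I w, T x⟫ - ⟪w, x⟫| ≤ 2ε‖w‖`,
that is `|⟪y, T x - I x⟫| ≤ 2ε‖y‖` for `y` in the range of `I`. Since `T` is onto and `T - I`
grows sublinearly, this range is dense, and testing against `y = T x - I x` gives
`‖T x - I x‖ ≤ 2ε`.
-/

open Filter Topology RealInnerProductSpace

noncomputable section

lemma tendsto_inv_two_pow : Tendsto (fun n : ℕ => ((2:ℝ) ^ n)⁻¹) atTop (𝓝 0) :=
  tendsto_inv_atTop_zero.comp (tendsto_pow_atTop_atTop_of_one_lt one_lt_two)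

lemma inv_two_pow_mul_sqrt_le {a b : ℝ} (x : ℝ) (hb : 0 ≤ b) (n : ℕ) :
    ((2:ℝ) ^ n)⁻¹ * √(a * (2 ^ n * x) + b) ≤ √(a * x + b) * (√2)⁻¹ ^ n := by
  have h2n : (2:ℝ) ^ n = (√2 ^ n) ^ 2 := by
    rw [← pow_mul, mul_comm, pow_mul, Real.sq_sqrt zero_le_two]
  have hb' : b ≤ 2 ^ n * b := le_mul_of_one_le_left hb (one_le_pow₀ one_le_two)
  calc ((2:ℝ) ^ n)⁻¹ * √(a * (2 ^ n * x) + b) ≤ ((2:ℝ) ^ n)⁻¹ * √(2 ^ n * (a * x + b)) := by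
        gcongr; linarith
    _ = √(a * x + b) * (√2)⁻¹ ^ n := by
        rw [Real.sqrt_mul (by positivity), h2n, Real.sqrt_sq (by positivity), inv_pow, sq,
          mul_inv, ← mul_assoc, inv_mul_cancel_right₀ (by positivity), mul_comm]

lemma abs_sq_sub_sq_le {a b ε : ℝ} (ha : 0 ≤ a) (hb : 0 ≤ b) (h : |a - b| ≤ ε) :
    |a ^ 2 - b ^ 2| ≤ ε * (2 * b + ε) := by
  rw [sq_sub_sq, abs_mul, abs_of_nonneg (by positivity), mul_comm]
  exact mul_le_mul h (by linarith [(abs_le.1 h).2]) (by positivity) ((abs_nonneg _).trans h)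

lemma inv_sqrt_two_lt_one : (√2)⁻¹ < 1 :=
  inv_lt_one_of_one_lt₀ (by simp [Real.lt_sqrt])

variable {E F : Type*}

theorem Isometry.exists_linearIsometry_eq_of_map_zero [NormedAddCommGroup E] [NormedSpace ℝ E]
    [NormedAddCommGroup F] [NormedSpace ℝ F] [StrictConvexSpace ℝ F] {f : E → F}
    (hf : Isometry f) (h0 : f 0 = 0) : ∃ L : E →ₗᵢ[ℝ] F, ⇑L = f := by
  refine ⟨hf.affineIsometryOfStrictConvexSpace.linearIsometry, funext fun x => ?_⟩
  simpa [h0] using hf.affineIsometryOfStrictConvexSpace.map_vsub x 0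

lemma norm_le_of_denseRange_of_abs_inner_le {α : Type*} [NormedAddCommGroup F]
    [InnerProductSpace ℝ F] {f : α → F} (hf : DenseRange f) {c : ℝ} (hc : 0 ≤ c) {d : F}
    (h : ∀ a, |⟪f a, d⟫| ≤ c * ‖f a‖) : ‖d‖ ≤ c := by
  have hd : |⟪d, d⟫| ≤ c * ‖d‖ :=
    hf.induction_on (p := fun y => |⟪y, d⟫| ≤ c * ‖y‖) d
      (isClosed_le (by fun_prop) (by fun_prop)) h
  rw [real_inner_self_eq_norm_sq, abs_of_nonneg (sq_nonneg _), sq] at hd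
  rcases (norm_nonneg d).eq_or_lt with hd0 | hd0
  · rw [← hd0]; exact hc
  · exact le_of_mul_le_mul_right hd hd0

def IsApproxIsometry [SeminormedAddCommGroup E] [SeminormedAddCommGroup F] (ε : ℝ) (T : E → F) :
    Prop :=
  ∀ x y, |‖T x - T y‖ - ‖x - y‖| ≤ ε

def dyadicRescale [AddCommGroup E] [Module ℝ E] [AddCommGroup F] [Module ℝ F] (T : E → F) (n : ℕ)
    (x : E) : F :=
  ((2:ℝ) ^ n)⁻¹ • T ((2:ℝ) ^ n • x)

namespace IsApproxIsometry

section Normed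

variable [NormedAddCommGroup E] [NormedAddCommGroup F] {ε : ℝ} {T : E → F}

lemma nonneg (hT : IsApproxIsometry ε T) : 0 ≤ ε := by
  simpa using hT 0 0

lemma abs_norm_map_sub_norm_le (hT : IsApproxIsometry ε T) (hT0 : T 0 = 0) (x : E) :
    |‖T x‖ - ‖x‖| ≤ ε := by
  simpa [hT0] using hT x 0

variable [NormedSpace ℝ E] [NormedSpace ℝ F]

lemma abs_norm_dyadicRescale_sub_sub_norm_sub_le (hT : IsApproxIsometry ε T) (n : ℕ) (x y : E) :
    |‖dyadicRescale T n x - dyadicRescale T n y‖ - ‖x - y‖| ≤ ((2:ℝ) ^ n)⁻¹ * ε := by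
  have ht : (0:ℝ) < 2 ^ n := by positivity
  have h := hT ((2:ℝ) ^ n • x) ((2:ℝ) ^ n • y)
  rw [← smul_sub, norm_smul, Real.norm_of_nonneg ht.le] at h
  calc |‖dyadicRescale T n x - dyadicRescale T n y‖ - ‖x - y‖|
      = ((2:ℝ) ^ n)⁻¹ * |‖T ((2:ℝ) ^ n • x) - T ((2:ℝ) ^ n • y)‖ - 2 ^ n * ‖x - y‖| := by
        rw [dyadicRescale, dyadicRescale, ← smul_sub, norm_smul,
          Real.norm_of_nonneg (inv_nonneg.2 ht.le), ← abs_of_pos (inv_pos.2 ht), ← abs_mul,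
          abs_of_pos (inv_pos.2 ht), mul_sub, inv_mul_cancel_left₀ ht.ne']
    _ ≤ ((2:ℝ) ^ n)⁻¹ * ε := by gcongr

lemma norm_sub_eq_of_tendsto_dyadicRescale (hT : IsApproxIsometry ε T) {x y : E} {a b : F}
    (ha : Tendsto (dyadicRescale T · x) atTop (𝓝 a))
    (hb : Tendsto (dyadicRescale T · y) atTop (𝓝 b)) : ‖a - b‖ = ‖x - y‖ := by
  refine tendsto_nhds_unique (ha.sub hb).norm ?_
  have h := squeeze_zero_norm (fun n => (Real.norm_eq_abs _).trans_le
    (hT.abs_norm_dyadicRescale_sub_sub_norm_sub_le n x y))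
    (by simpa using tendsto_inv_two_pow.mul_const ε)
  simpa using h.add_const ‖x - y‖

lemma denseRange_of_norm_sub_le (hT : IsApproxIsometry ε T) (hT0 : T 0 = 0)
    (hsurj : Function.Surjective T) (L : E →ₗ[ℝ] F) {K a b : ℝ} (hK : 0 ≤ K) (ha : 0 ≤ a)
    (hb : 0 ≤ b) (hL : ∀ z, ‖T z - L z‖ ≤ K * √(a * ‖z‖ + b)) : DenseRange L := by
  intro y
  choose z hz using fun n : ℕ => hsurj ((2:ℝ) ^ n • y)
  have hz_norm (n : ℕ) : ‖z n‖ ≤ 2 ^ n * (‖y‖ + ε) := by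
    have h := (abs_le.1 (hT.abs_norm_map_sub_norm_le hT0 (z n))).1
    rw [hz, norm_smul, Real.norm_of_nonneg (by positivity)] at h
    nlinarith [one_le_pow₀ (M₀ := ℝ) one_le_two (n := n), hT.nonneg]
  have hbound (n : ℕ) : ‖L (((2:ℝ) ^ n)⁻¹ • z n) - y‖
      ≤ K * √(a * (‖y‖ + ε) + b) * (√2)⁻¹ ^ n := by
    have ht : (0:ℝ) < 2 ^ n := by positivity
    have hdiff : L (((2:ℝ) ^ n)⁻¹ • z n) - y = ((2:ℝ) ^ n)⁻¹ • (L (z n) - T (z n)) := by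
      rw [map_smul, smul_sub, hz, smul_smul, inv_mul_cancel₀ ht.ne', one_smul]
    calc ‖L (((2:ℝ) ^ n)⁻¹ • z n) - y‖ = ((2:ℝ) ^ n)⁻¹ * ‖T (z n) - L (z n)‖ := by
          rw [hdiff, norm_smul, Real.norm_of_nonneg (inv_nonneg.2 ht.le), norm_sub_rev]
      _ ≤ K * (((2:ℝ) ^ n)⁻¹ * √(a * (2 ^ n * (‖y‖ + ε)) + b)) := by
          rw [mul_left_comm]
          gcongr
          exact (hL (z n)).trans (by gcongr; exact hz_norm n)
      _ ≤ K * √(a * (‖y‖ + ε) + b) * (√2)⁻¹ ^ n := by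
          rw [mul_assoc]; exact mul_le_mul_of_nonneg_left (inv_two_pow_mul_sqrt_le _ hb n) hK
  refine mem_closure_of_tendsto (f := fun n => L (((2:ℝ) ^ n)⁻¹ • z n)) (b := atTop)
    (tendsto_iff_norm_sub_tendsto_zero.2 (squeeze_zero (fun _ => norm_nonneg _) hbound ?_))
    (Eventually.of_forall fun n => Set.mem_range_self _)
  simpa using (tendsto_pow_atTop_nhds_zero_of_lt_one (by positivity)
    inv_sqrt_two_lt_one).const_mul (K * √(a * (‖y‖ + ε) + b))

end Normed

section InnerTarget

variable [NormedAddCommGroup E] [NormedSpace ℝ E] [NormedAddCommGroup F] [InnerProductSpace ℝ F]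
  {ε : ℝ} {T : E → F}

lemma norm_map_sub_inv_two_smul_map_two_smul_sq_le (hT : IsApproxIsometry ε T) (hT0 : T 0 = 0)
    (z : E) : ‖T z - (2:ℝ)⁻¹ • T ((2:ℝ) • z)‖ ^ 2 ≤ 3 * ε * ‖z‖ + ε ^ 2 := by
  set u := T z
  set v := T ((2:ℝ) • z)
  -- Apollonius: `‖u‖² + ‖u - v‖² = 2‖u - 2⁻¹ • v‖² + ‖v‖² / 2`
  have hpar := parallelogram_law_with_norm ℝ (u - (2:ℝ)⁻¹ • v) ((2:ℝ)⁻¹ • v)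
  rw [sub_add_cancel, sub_sub, ← two_smul ℝ, smul_smul, mul_inv_cancel₀ two_ne_zero, one_smul,
    norm_smul, Real.norm_of_nonneg (by norm_num)] at hpar
  have hu := abs_le.1 (hT.abs_norm_map_sub_norm_le hT0 z)
  have hv := abs_le.1 (hT.abs_norm_map_sub_norm_le hT0 ((2:ℝ) • z))
  have huv := abs_le.1 (hT z ((2:ℝ) • z))
  rw [norm_smul, Real.norm_two] at hv
  rw [show z - (2:ℝ) • z = -z by rw [two_smul]; abel, norm_neg] at huv
  have hε := hT.nonneg
  have hz := norm_nonneg z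
  -- the lower bound `2‖z‖ - ε ≤ ‖v‖` only helps when its left side is nonnegative
  rcases le_or_gt ε (2 * ‖z‖) with h | h <;>
    nlinarith [norm_nonneg u, norm_nonneg (u - v), norm_nonneg v]

lemma dist_dyadicRescale_succ_le (hT : IsApproxIsometry ε T) (hT0 : T 0 = 0) (x : E) (n : ℕ) :
    dist (dyadicRescale T n x) (dyadicRescale T (n + 1) x)
      ≤ √(3 * ε * ‖x‖ + ε ^ 2) * (√2)⁻¹ ^ n := by
  have ht : (0:ℝ) < 2 ^ n := by positivity
  set z := (2:ℝ) ^ n • x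
  have hsucc : dyadicRescale T (n + 1) x = ((2:ℝ) ^ n)⁻¹ • (2:ℝ)⁻¹ • T ((2:ℝ) • z) := by
    rw [dyadicRescale, smul_smul, smul_smul, pow_succ, mul_inv, mul_comm (2:ℝ)]
  have hstep := hT.norm_map_sub_inv_two_smul_map_two_smul_sq_le hT0 z
  rw [norm_smul, Real.norm_of_nonneg ht.le] at hstep
  calc dist (dyadicRescale T n x) (dyadicRescale T (n + 1) x)
      = ((2:ℝ) ^ n)⁻¹ * ‖T z - (2:ℝ)⁻¹ • T ((2:ℝ) • z)‖ := by
        rw [hsucc, dist_eq_norm, dyadicRescale, ← smul_sub, norm_smul,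
          Real.norm_of_nonneg (inv_nonneg.2 ht.le)]
    _ ≤ ((2:ℝ) ^ n)⁻¹ * √(3 * ε * (2 ^ n * ‖x‖) + ε ^ 2) := by
        gcongr; exact Real.le_sqrt_of_sq_le hstep
    _ ≤ √(3 * ε * ‖x‖ + ε ^ 2) * (√2)⁻¹ ^ n := inv_two_pow_mul_sqrt_le _ (sq_nonneg ε) n

lemma cauchySeq_dyadicRescale (hT : IsApproxIsometry ε T) (hT0 : T 0 = 0) (x : E) :
    CauchySeq (dyadicRescale T · x) :=
  cauchySeq_of_le_geometric _ _ inv_sqrt_two_lt_one (hT.dist_dyadicRescale_succ_le hT0 x)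

lemma norm_map_sub_le_of_tendsto_dyadicRescale (hT : IsApproxIsometry ε T) (hT0 : T 0 = 0)
    {x : E} {a : F} (ha : Tendsto (dyadicRescale T · x) atTop (𝓝 a)) :
    ‖T x - a‖ ≤ √(3 * ε * ‖x‖ + ε ^ 2) / (1 - (√2)⁻¹) := by
  simpa [dyadicRescale, dist_eq_norm] using dist_le_of_le_geometric_of_tendsto₀ _ _
    inv_sqrt_two_lt_one (hT.dist_dyadicRescale_succ_le hT0 x) ha

end InnerTarget

section Inner

variable [NormedAddCommGroup E] [InnerProductSpace ℝ E] [NormedAddCommGroup F]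
  [InnerProductSpace ℝ F] {ε : ℝ} {T : E → F}

lemma abs_inner_map_map_sub_inner_le (hT : IsApproxIsometry ε T) (hT0 : T 0 = 0) (u v : E) :
    |⟪T u, T v⟫ - ⟪u, v⟫| ≤ 2 * ε * (‖u‖ + ‖v‖ + ε) := by
  have hu := abs_sq_sub_sq_le (norm_nonneg _) (norm_nonneg _) (hT.abs_norm_map_sub_norm_le hT0 u)
  have hv := abs_sq_sub_sq_le (norm_nonneg _) (norm_nonneg _) (hT.abs_norm_map_sub_norm_le hT0 v)
  have huv := abs_sq_sub_sq_le (norm_nonneg _) (norm_nonneg _) (hT u v)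
  have htri := norm_sub_le u v
  have hε := hT.nonneg
  rw [abs_le] at hu hv huv ⊢
  constructor <;> nlinarith [norm_sub_sq_real (T u) (T v), norm_sub_sq_real u v]

lemma abs_inner_sub_inner_le_of_tendsto_dyadicRescale (hT : IsApproxIsometry ε T)
    (hT0 : T 0 = 0) {w : E} {a : F} (ha : Tendsto (dyadicRescale T · w) atTop (𝓝 a)) (x : E) :
    |⟪a, T x⟫ - ⟪w, x⟫| ≤ 2 * ε * ‖w‖ := by
  have hbound (n : ℕ) : |⟪dyadicRescale T n w, T x⟫ - ⟪w, x⟫|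
      ≤ 2 * ε * ‖w‖ + ((2:ℝ) ^ n)⁻¹ * (2 * ε * (‖x‖ + ε)) := by
    have ht : (0:ℝ) < 2 ^ n := by positivity
    have h := hT.abs_inner_map_map_sub_inner_le hT0 ((2:ℝ) ^ n • w) x
    rw [norm_smul, Real.norm_of_nonneg ht.le] at h
    calc |⟪dyadicRescale T n w, T x⟫ - ⟪w, x⟫|
        = ((2:ℝ) ^ n)⁻¹ * |⟪T ((2:ℝ) ^ n • w), T x⟫ - ⟪(2:ℝ) ^ n • w, x⟫| := by
          rw [dyadicRescale, real_inner_smul_left, real_inner_smul_left,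
            ← abs_of_pos (inv_pos.2 ht), ← abs_mul, abs_of_pos (inv_pos.2 ht), mul_sub,
            inv_mul_cancel_left₀ ht.ne']
      _ ≤ ((2:ℝ) ^ n)⁻¹ * (2 * ε * (2 ^ n * ‖w‖ + ‖x‖ + ε)) := by gcongr
      _ = 2 * ε * ‖w‖ + ((2:ℝ) ^ n)⁻¹ * (2 * ε * (‖x‖ + ε)) := by field_simp; ring
  refine le_of_tendsto_of_tendsto' ((ha.inner tendsto_const_nhds).sub_const _).abs ?_ hbound
  simpa using (tendsto_inv_two_pow.mul_const (2 * ε * (‖x‖ + ε))).const_add (2 * ε * ‖w‖)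

end Inner

end IsApproxIsometry

end

open Filter in
theorem hyers_ulam_general {E : Type*} [NormedAddCommGroup E] [InnerProductSpace ℝ E]
    [CompleteSpace E] (ε : ℝ) (T : E → E)
    (hsurj : Function.Surjective T)
    (hT : ∀ x y : E, |‖T x - T y‖ - ‖x - y‖| < ε) (hT0 : T 0 = 0) :
    ∃ I : E → E,
      (∀ x : E, Tendsto (fun n : ℕ => ((2 : ℝ) ^ n)⁻¹ • T ((2 : ℝ) ^ n • x))
        atTop (nhds (I x))) ∧
      (∀ x y : E, ‖I x - I y‖ = ‖x - y‖) ∧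
      (∀ x : E, ‖T x - I x‖ ≤ 10 * ε) := by
  have hT : IsApproxIsometry ε T := fun x y => (hT x y).le
  choose I hI using fun x => cauchySeq_tendsto_of_complete (hT.cauchySeq_dyadicRescale hT0 x)
  have hIiso : ∀ x y, ‖I x - I y‖ = ‖x - y‖ := fun x y =>
    hT.norm_sub_eq_of_tendsto_dyadicRescale (hI x) (hI y)
  have hI0 : I 0 = 0 := tendsto_nhds_unique (hI 0) (by simp [dyadicRescale, hT0])
  obtain ⟨L, rfl⟩ := (Isometry.of_dist_eq fun x y => by simp only [dist_eq_norm, hIiso])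
    |>.exists_linearIsometry_eq_of_map_zero hI0
  have hdense : DenseRange L :=
    hT.denseRange_of_norm_sub_le hT0 hsurj L.toLinearMap
      (inv_nonneg.2 (sub_nonneg.2 inv_sqrt_two_lt_one.le)) (mul_nonneg zero_le_three hT.nonneg)
      (sq_nonneg ε) fun z => (hT.norm_map_sub_le_of_tendsto_dyadicRescale hT0 (hI z)).trans_eq
        (div_eq_inv_mul _ _)
  refine ⟨L, hI, hIiso, fun x => ?_⟩
  refine (norm_le_of_denseRange_of_abs_inner_le hdense (c := 2 * ε)
    (mul_nonneg zero_le_two hT.nonneg) fun w => ?_).trans (by linarith [hT.nonneg])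
  rw [inner_sub_right, L.inner_map_map, L.norm_map]
  exact hT.abs_inner_sub_inner_le_of_tendsto_dyadicRescale hT0 (hI w) x

open Filter in
/-- Hyers–Ulam (1945): every surjective ε-isometry of a complete real Hilbert space
fixing the origin is within 10ε of an isometry, obtained as a dyadic limit. -/
theorem hyers_ulam {E : Type*} [NormedAddCommGroup E] [InnerProductSpace ℝ E]
    [CompleteSpace E] (ε : ℝ) (hε : 0 < ε) (T : E → E)
    (hsurj : Function.Surjective T)
    (hT : ∀ x y : E, |‖T x - T y‖ - ‖x - y‖| < ε) (hT0 : T 0 = 0) :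
    ∃ I : E → E,
      (∀ x : E, Tendsto (fun n : ℕ => ((2 : ℝ) ^ n)⁻¹ • T ((2 : ℝ) ^ n • x))
        atTop (nhds (I x))) ∧
      (∀ x y : E, ‖I x - I y‖ = ‖x - y‖) ∧
      (∀ x : E, ‖T x - I x‖ ≤ 10 * ε) :=
  hyers_ulam_general ε T hsurj hT hT0
end

section
/- Let E be a normed space and T : E → E a map such that |‖T(x) − T(y)‖ − ‖x − y‖| < ε for all x,y, and suppose I(x) = lim_{n→∞} T(2ⁿx)/2ⁿ exists for all x ∈ E. Then ‖I(x) − I(y)‖ = ‖x − y‖ for all x,y ∈ E. -/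
open Filter in
/-- The isometry step of the Hyers–Ulam theorem: the dyadic limit of an ε-isometry
preserves norms of differences. -/
theorem dyadic_limit_isometry {E : Type*} [NormedAddCommGroup E] [NormedSpace ℝ E]
    (ε : ℝ) (T : E → E) (hT : ∀ x y : E, |‖T x - T y‖ - ‖x - y‖| < ε)
    (I : E → E)
    (hI : ∀ x : E, Tendsto (fun n : ℕ => ((2 : ℝ) ^ n)⁻¹ • T ((2 : ℝ) ^ n • x))
      atTop (nhds (I x))) :
    ∀ x y : E, ‖I x - I y‖ = ‖x - y‖ := by
  intro x y
  have h1 : Tendsto (fun n : ℕ =>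
      ‖((2 : ℝ) ^ n)⁻¹ • T ((2 : ℝ) ^ n • x) - ((2 : ℝ) ^ n)⁻¹ • T ((2 : ℝ) ^ n • y)‖)
      atTop (nhds ‖I x - I y‖) :=
    (Tendsto.sub (hI x) (hI y)).norm
  have h2 : Tendsto (fun n : ℕ =>
      ‖((2 : ℝ) ^ n)⁻¹ • T ((2 : ℝ) ^ n • x) - ((2 : ℝ) ^ n)⁻¹ • T ((2 : ℝ) ^ n • y)‖)
      atTop (nhds ‖x - y‖) := by
    have key : ∀ n : ℕ,
        |‖((2 : ℝ) ^ n)⁻¹ • T ((2 : ℝ) ^ n • x) - ((2 : ℝ) ^ n)⁻¹ • T ((2 : ℝ) ^ n • y)‖ -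
          ‖x - y‖| ≤ ε * ((2 : ℝ) ^ n)⁻¹ := by
      intro n
      have hp : (0 : ℝ) < (2 : ℝ) ^ n := by positivity
      have h3 : ((2 : ℝ) ^ n)⁻¹ • T ((2 : ℝ) ^ n • x) - ((2 : ℝ) ^ n)⁻¹ • T ((2 : ℝ) ^ n • y)
          = ((2 : ℝ) ^ n)⁻¹ • (T ((2 : ℝ) ^ n • x) - T ((2 : ℝ) ^ n • y)) := by
        rw [smul_sub]
      rw [h3, norm_smul, Real.norm_eq_abs, abs_inv, abs_of_pos hp]
      have hxy : ‖x - y‖ = ((2 : ℝ) ^ n)⁻¹ * ‖(2 : ℝ) ^ n • x - (2 : ℝ) ^ n • y‖ := by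
        rw [← smul_sub, norm_smul, Real.norm_eq_abs, abs_of_pos hp, ← mul_assoc,
          inv_mul_cancel₀ hp.ne', one_mul]
      rw [hxy, ← mul_sub, abs_mul, abs_inv, abs_of_pos hp, mul_comm ε]
      exact mul_le_mul_of_nonneg_left (hT _ _).le (by positivity)
    have hlim : Tendsto (fun n : ℕ => ε * ((2 : ℝ) ^ n)⁻¹) atTop (nhds 0) := by
      have := tendsto_inv_atTop_zero.comp (tendsto_pow_atTop_atTop_of_one_lt
        (show (1:ℝ) < 2 by norm_num))
      simpa using this.const_mul ε
    have : Tendsto (fun n : ℕ =>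
        ‖((2 : ℝ) ^ n)⁻¹ • T ((2 : ℝ) ^ n • x) - ((2 : ℝ) ^ n)⁻¹ • T ((2 : ℝ) ^ n • y)‖ -
          ‖x - y‖) atTop (nhds 0) := by
      apply squeeze_zero_norm (fun n => by simpa using key n) hlim
    have := this.add_const ‖x - y‖
    simpa using this
  exact tendsto_nhds_unique h1 h2
end
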